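/- The set of factors of an infinite word w has a finite separating set of factors if and only if w is ultimately periodic. -/

import Mathlib

/-- `npow w n` is the word `w` repeated `n` times. -/
def npow {α : Type*} (w : List α) : ℕ → List α
  | 0 => []
  | n + 1 => w ++ npow w n

/-- `occ w x` is the number of occurrences of `x` as a factor of `w`,
i.e. the number of factorizations `w = s ++ x ++ t`. -/
def occ {α : Type*} [DecidableEq α] (w x : List α) : ℕ :=
  ((List.range (w.length + 1)).filter (fun i => x <+: w.drop i)).length

/-- A nonempty word is primitive if it is not a power of a shorter word. -/
def Primitive {α : Type*} (p : List α) : Prop :=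
  p ≠ [] ∧ ∀ (q : List α) (n : ℕ), p = npow q n → q = p

/-- `u` and `v` are `k`-abelian equivalent. -/
def KAbEq {α : Type*} [DecidableEq α] (k : ℕ) (u v : List α) : Prop :=
  ∀ x : List α, x.length ≤ k → occ u x = occ v x

/-- `X` is a separating set of factors of `L`. -/
def IsSSF {α : Type*} [DecidableEq α] (X L : Set (List α)) : Prop :=
  ∀ u ∈ L, ∀ v ∈ L, u ≠ v → ∃ x ∈ X, occ u x ≠ occ v x

/-- `L` has a finite separating set of factors. -/
def HasFiniteSSF {α : Type*} [DecidableEq α] (L : Set (List α)) : Prop :=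
  ∃ X : Set (List α), X.Finite ∧ IsSSF X L

/-- `x` is a (finite) factor of the infinite word `W`. -/
def FactorOf {α : Type*} (x : List α) (W : ℕ → α) : Prop :=
  ∃ i : ℕ, x = (List.range x.length).map fun j => W (i + j)

/-- The infinite word `W` is ultimately periodic. -/
def UltPeriodic {α : Type*} (W : ℕ → α) : Prop :=
  ∃ N p : ℕ, 0 < p ∧ ∀ n, N ≤ n → W (n + p) = W n

/-!
A finite separating set of factors exists iff, for some `k`, distinct factors are never
`k`-abelian equivalent; and `u`, `v` are `k + 1`-abelian equivalent iff they have the same prefix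
of length `k` and the same number of occurrences of every factor of length `k + 1`.
If `W` has period `p` from position `N` on, a factor is determined by its length and its prefix
of length `N + p`. Otherwise, by pigeonhole some block of `W` beginning and ending with the same
factor of length `k` recurs arbitrarily far out, and two long factors that start in this block,
one block period apart, are distinct but `k + 1`-abelian equivalent.
-/

section

variable {α : Type*}

theorem prefix_iff_of_take_eq {u v : List α} {m : ℕ} (h : u.take m = v.take m) {x : List α}
    (hx : x.length ≤ m) : x <+: u ↔ x <+: v := by
  calc x <+: u ↔ x <+: u.take m := by simp [List.prefix_take_iff, hx]
    _ ↔ x <+: v.take m := by rw [h]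
    _ ↔ x <+: v := by simp [List.prefix_take_iff, hx]

section Occurrences

variable [DecidableEq α]

theorem occ_nil_left (x : List α) : occ [] x = if x = [] then 1 else 0 := by
  by_cases hx : x = [] <;> simp [occ, hx]

theorem occ_cons (b : α) (w x : List α) :
    occ (b :: w) x = occ w x + if x <+: b :: w then 1 else 0 := by
  simp only [occ, List.length_cons, List.range_succ_eq_map, List.filter_cons, List.drop_zero,
    List.filter_map, Function.comp_def, Nat.succ_eq_add_one, List.drop_succ_cons]
  by_cases hx : x <+: b :: w <;> simp [hx, add_comm]

theorem occ_nil_right (w : List α) : occ w [] = w.length + 1 := by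
  induction w with
  | nil => simp [occ_nil_left]
  | cons b w ih => simp [occ_cons, ih]

theorem occ_eq_zero_of_length_lt {w x : List α} (h : w.length < x.length) : occ w x = 0 := by
  induction w with
  | nil => simp [occ_nil_left, List.ne_nil_of_length_pos h]
  | cons b w ih =>
    have hpre : ¬ x <+: b :: w := fun hp => by have := hp.length_le; omega
    simp [occ_cons, hpre, ih (by simp only [List.length_cons] at h; omega)]

/-- Every occurrence of `x` is either at the start of `w` or preceded by a letter. -/
theorem occ_eq_sum_occ_cons_add [Fintype α] (w x : List α) :
    occ w x = ∑ a, occ w (a :: x) + if x <+: w then 1 else 0 := by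
  induction w with
  | nil => simp [occ_nil_left]
  | cons b w ih =>
    simp only [occ_cons, ih, List.cons_prefix_cons, Finset.sum_add_distrib, ite_and,
      Finset.sum_ite_eq', Finset.mem_univ, if_true]

end Occurrences

section KAbelian

variable [DecidableEq α] {k : ℕ} {u v : List α}

theorem KAbEq.mono {l : ℕ} (h : KAbEq k u v) (hl : l ≤ k) : KAbEq l u v :=
  fun x hx => h x (hx.trans hl)

theorem KAbEq.length_eq (h : KAbEq k u v) : u.length = v.length := by
  simpa [occ_nil_right] using h [] (Nat.zero_le k)

theorem kAbEq_succ_iff [Fintype α] :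
    KAbEq (k + 1) u v ↔
      u.take k = v.take k ∧ ∀ x : List α, x.length = k + 1 → occ u x = occ v x := by
  constructor
  · intro h
    refine ⟨?_, fun x hx => h x hx.le⟩
    have hpre : u.take k <+: v := by
      have := occ_eq_sum_occ_cons_add u (u.take k)
      rw [h (u.take k) (by simp), occ_eq_sum_occ_cons_add v,
        Finset.sum_congr rfl fun a _ => h (a :: u.take k) (by simp)] at this
      simpa [List.take_prefix] using this
    refine (List.prefix_take_iff.2 ⟨hpre, by simp⟩).eq_of_length ?_
    simp [h.length_eq]
  · rintro ⟨htake, hocc⟩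
    suffices ∀ r x, x.length + r = k + 1 → occ u x = occ v x from
      fun x hx => this (k + 1 - x.length) x (by omega)
    intro r
    induction r with
    | zero => exact fun x hx => hocc x hx
    | succ r ih =>
      intro x hx
      rw [occ_eq_sum_occ_cons_add u, occ_eq_sum_occ_cons_add v,
        Finset.sum_congr rfl fun a _ => ih (a :: x) (by simp; omega)]
      simp only [prefix_iff_of_take_eq htake (x := x) (by omega)]

end KAbelian

theorem hasFiniteSSF_iff_exists_kAbEq [DecidableEq α] [Finite α] {L : Set (List α)} :
    HasFiniteSSF L ↔ ∃ k, ∀ u ∈ L, ∀ v ∈ L, KAbEq k u v → u = v := by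
  constructor
  · rintro ⟨X, hX, hsep⟩
    obtain ⟨k, hk⟩ := (hX.image List.length).bddAbove
    refine ⟨k, fun u hu v hv huv => by_contra fun hne => ?_⟩
    obtain ⟨x, hxX, hx⟩ := hsep u hu v hv hne
    exact hx (huv x (hk ⟨x, hxX, rfl⟩))
  · rintro ⟨k, hk⟩
    refine ⟨{x | x.length ≤ k}, List.finite_length_le α k, fun u hu v hv hne => ?_⟩
    by_contra! h
    exact hne (hk u hu v hv h)

theorem sum_range_eq_sum_range_shift {M : Type*} [AddCancelCommMonoid M] (f : ℕ → M) {ℓ g : ℕ}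
    (h : ∀ j < g, f j = f (ℓ + j)) :
    ∑ j ∈ Finset.range ℓ, f j = ∑ j ∈ Finset.range ℓ, f (g + j) := by
  have hsplit := Finset.sum_range_add f g ℓ
  rw [add_comm g ℓ, Finset.sum_range_add,
    Finset.sum_congr rfl fun j hj => h j (Finset.mem_range.1 hj), add_comm] at hsplit
  exact add_left_cancel hsplit

section Windows

def window (W : ℕ → α) (i n : ℕ) : List α := (List.range n).map fun j => W (i + j)

variable {W : ℕ → α} {i j n : ℕ}

@[simp]
theorem window_length : (window W i n).length = n := by simp [window]

theorem factorOf_iff {x : List α} : FactorOf x W ↔ ∃ i n, x = window W i n := by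
  constructor
  · rintro ⟨i, hi⟩
    exact ⟨i, x.length, hi⟩
  · rintro ⟨i, n, rfl⟩
    exact ⟨i, by rw [window_length]; rfl⟩

theorem window_succ : window W i (n + 1) = W i :: window W (i + 1) n := by
  simp [window, List.range_succ_eq_map, Nat.add_comm, Nat.add_left_comm]

theorem window_take (m : ℕ) : (window W i n).take m = window W i (min m n) := by
  rw [window, window, ← List.take_range, List.map_take]

theorem window_eq_window_iff : window W i n = window W j n ↔ ∀ t < n, W (i + t) = W (j + t) := by
  simp [window, List.map_inj_left]

theorem prefix_window_iff {x : List α} :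
    x <+: window W i n ↔ x.length ≤ n ∧ window W i x.length = x := by
  rw [List.prefix_iff_eq_take, window_take]
  constructor
  · intro h
    have hle : x.length ≤ n := by
      have := congrArg List.length h
      simp only [window_length] at this
      omega
    rw [min_eq_left hle] at h
    exact ⟨hle, h.symm⟩
  · rintro ⟨hle, h⟩
    rw [min_eq_left hle, h]

theorem occ_window_of_length_eq [DecidableEq α] {x : List α} {k : ℕ} (hx : x.length = k + 1)
    (n a : ℕ) :
    occ (window W a (n + k)) x =
      ∑ j ∈ Finset.range n, if window W (a + j) (k + 1) = x then 1 else 0 := by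
  induction n generalizing a with
  | zero => simpa using occ_eq_zero_of_length_lt (w := window W a k) (by simp [hx])
  | succ n ih =>
    rw [Nat.add_right_comm, window_succ, occ_cons, ← window_succ, ih, Finset.sum_range_succ']
    simp [prefix_window_iff, hx, Nat.add_assoc, Nat.add_comm 1]

end Windows

section Periodic

variable {W : ℕ → α} {N p : ℕ}

theorem window_eq_window_of_periodic (hp : 0 < p) (hper : ∀ n, N ≤ n → W (n + p) = W n)
    {i j n : ℕ} (h : ∀ t < min (N + p) n, W (i + t) = W (j + t)) :
    window W i n = window W j n := by
  rw [window_eq_window_iff]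
  intro t
  induction t using Nat.strong_induction_on with
  | _ t ih =>
    intro ht
    by_cases htp : t < N + p
    · exact h t (lt_min htp ht)
    · calc W (i + t) = W (i + (t - p) + p) := by congr 1; omega
        _ = W (i + (t - p)) := hper _ (by omega)
        _ = W (j + (t - p)) := ih (t - p) (by omega) (by omega)
        _ = W (j + (t - p) + p) := (hper _ (by omega)).symm
        _ = W (j + t) := by congr 1; omega

theorem eq_of_kAbEq_of_periodic [DecidableEq α] [Fintype α] (hp : 0 < p)
    (hper : ∀ n, N ≤ n → W (n + p) = W n) {u v : List α} (hu : FactorOf u W)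
    (hv : FactorOf v W) (huv : KAbEq (N + p + 1) u v) : u = v := by
  obtain ⟨i, n, rfl⟩ := factorOf_iff.1 hu
  obtain ⟨j, n', rfl⟩ := factorOf_iff.1 hv
  obtain rfl : n = n' := by simpa using huv.length_eq
  have htake := (kAbEq_succ_iff.1 huv).1
  rw [window_take, window_take, window_eq_window_iff] at htake
  exact window_eq_window_of_periodic hp hper htake

end Periodic

section Recurrence

variable [Fintype α] (W : ℕ → α)

theorem exists_window_eq_window (i k : ℕ) :
    ∃ a b, a < b ∧ b ≤ Fintype.card α ^ k ∧ window W (i + a) k = window W (i + b) k := by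
  have hcard : Fintype.card (List.Vector α k) < Fintype.card (Fin (Fintype.card α ^ k + 1)) := by
    simp [card_vector]
  obtain ⟨a, b, hab, heq⟩ := Fintype.exists_ne_map_eq_of_card_lt (β := List.Vector α k)
    (fun j : Fin (Fintype.card α ^ k + 1) => ⟨window W (i + j) k, window_length⟩) hcard
  have heq : window W (i + a) k = window W (i + b) k := congrArg Subtype.val heq
  rcases Fin.lt_or_lt_of_ne hab with hlt | hlt
  · exact ⟨a, b, hlt, Nat.lt_succ_iff.1 b.2, heq⟩
  · exact ⟨b, a, hlt, Nat.lt_succ_iff.1 a.2, heq.symm⟩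

theorem exists_frequently_window_eq (n : ℕ) :
    ∃ s, ∀ m, ∃ q, m ≤ q ∧ window W q n = window W s n := by
  obtain ⟨y, hy⟩ := Finite.exists_infinite_fiber (β := List.Vector α n)
    fun q => (⟨window W q n, window_length⟩ : List.Vector α n)
  have hy : Set.Infinite _ := Set.infinite_coe_iff.1 hy
  obtain ⟨s, hs⟩ := hy.nonempty
  refine ⟨s, fun m => ?_⟩
  obtain ⟨q, hq, hmq⟩ := hy.exists_gt m
  exact ⟨q, hmq.le, congrArg Subtype.val (hq.trans hs.symm)⟩

theorem exists_frequently_window_eq_of_window_eq (k : ℕ) :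
    ∃ s g, 0 < g ∧ window W s k = window W (s + g) k ∧
      ∀ m, ∃ q, m ≤ q ∧ window W q (g + k) = window W s (g + k) := by
  obtain ⟨s, hs⟩ := exists_frequently_window_eq W (Fintype.card α ^ k + k)
  obtain ⟨a, b, hab, hb, heq⟩ := exists_window_eq_window W s k
  refine ⟨s + a, b - a, by omega, by rwa [Nat.add_assoc, Nat.add_sub_cancel' hab.le], fun m => ?_⟩
  obtain ⟨q, hmq, hq⟩ := hs m
  refine ⟨q + a, by omega, ?_⟩
  rw [window_eq_window_iff] at hq ⊢
  intro t ht
  simpa [Nat.add_assoc] using hq (a + t) (by omega)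

end Recurrence

/-- The two factors are `W[s, q + k)` and `W[s + g, q + g + k)`, where `W[s, s + g + k)` recurs
at `q`: both have the prefix `W[s, s + k)`, and the windows of length `k + 1` that one has and
the other lacks are those at `s, …, s + g - 1` and at `q, …, q + g - 1`, which agree. -/
theorem exists_ne_kAbEq_of_not_ultPeriodic [DecidableEq α] [Fintype α] {W : ℕ → α}
    (hW : ¬UltPeriodic W) (k : ℕ) :
    ∃ u v, FactorOf u W ∧ FactorOf v W ∧ u ≠ v ∧ KAbEq (k + 1) u v := by
  obtain ⟨s, g, hg, hprefix, hrec⟩ := exists_frequently_window_eq_of_window_eq W k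
  obtain ⟨t, ht⟩ : ∃ t, W (s + t) ≠ W (s + g + t) := by
    by_contra! h
    refine hW ⟨s, g, hg, fun n hn => ?_⟩
    have := h (n - s)
    rwa [show s + (n - s) = n by omega, show s + g + (n - s) = n + g by omega, eq_comm] at this
  obtain ⟨q, hsq, hq⟩ := hrec (s + t + 1)
  refine ⟨window W s (q - s + k), window W (s + g) (q - s + k), factorOf_iff.2 ⟨_, _, rfl⟩,
    factorOf_iff.2 ⟨_, _, rfl⟩, fun h => ht (window_eq_window_iff.1 h t (by omega)),
    kAbEq_succ_iff.2 ⟨?_, fun x hx => ?_⟩⟩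
  · rwa [window_take, window_take, min_eq_left (by omega)]
  · rw [occ_window_of_length_eq hx, occ_window_of_length_eq hx]
    simp only [Nat.add_assoc]
    refine sum_range_eq_sum_range_shift (fun j => if window W (s + j) (k + 1) = x then 1 else 0)
      fun j hj => ?_
    rw [window_eq_window_iff] at hq
    have : window W (s + j) (k + 1) = window W (s + (q - s + j)) (k + 1) := by
      rw [window_eq_window_iff]
      intro r hr
      simpa [Nat.add_assoc, show s + (q - s + (j + r)) = q + (j + r) by omega] using
        (hq (j + r) (by omega)).symm
    simp only [this]

end

/-- The set of factors of an infinite word has a finite SSF iff the word is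
ultimately periodic. -/
theorem stmt19 {α : Type*} [DecidableEq α] [Fintype α] (W : ℕ → α) :
    HasFiniteSSF {x : List α | FactorOf x W} ↔ UltPeriodic W := by
  rw [hasFiniteSSF_iff_exists_kAbEq]
  constructor
  · rintro ⟨k, hk⟩
    by_contra hW
    obtain ⟨u, v, hu, hv, hne, huv⟩ := exists_ne_kAbEq_of_not_ultPeriodic hW k
    exact hne (hk u hu v hv (huv.mono k.le_succ))
  · rintro ⟨N, p, hp, hper⟩
    exact ⟨N + p + 1, fun u hu v hv => eq_of_kAbEq_of_periodic hp hper hu hv⟩
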